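/- Let N ≥ 2, α, β > 0 with αβ = N², λ, μ > 0, and let T̃ = T̃₁ ∘ T̃₂ with T̃₁(v)(t) = ∫_t^1 (∫_0^s N τ^{N-1} λ v(τ)^α dτ)^{1/N} ds, T̃₂ analogous with μ and β. Let Γ = ∫_{1/4}^{3/4} (∫_{1/4}^s N τ^{N-1} dτ)^{1/N} ds. If v ∈ K ∖ {0} is a fixed point of T̃, where K = {v ∈ C[0,1] : v ≥ 0, min_{[1/4,3/4]} v ≥ (1/4)‖v‖}, then λ^{1/N} μ^{α/N²} (Γ/4)^{1 + α/N} ≤ 1. -/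

import Mathlib

open Set

/-- Supremum norm on `C[0,1]`. -/
noncomputable def supNorm (v : ℝ → ℝ) : ℝ :=
  sSup ((fun t => |v t|) '' Icc (0:ℝ) 1)

/-- Membership in the cone `K ⊂ C[0,1]`. -/
def memK (v : ℝ → ℝ) : Prop :=
  ContinuousOn v (Icc (0:ℝ) 1) ∧ (∀ t ∈ Icc (0:ℝ) 1, 0 ≤ v t) ∧
    ∀ t ∈ Icc (1/4 : ℝ) (3/4), (1/4) * supNorm v ≤ v t

/-- The solution operator with parameter `c` and exponent `γ`. -/
noncomputable def MAopc (N : ℕ) (c γ : ℝ) (v : ℝ → ℝ) : ℝ → ℝ :=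
  fun t => ∫ s in t..(1:ℝ),
    (∫ τ in (0:ℝ)..s, (N:ℝ) * τ ^ (N - 1) * (c * v τ ^ γ)) ^ ((N:ℝ)⁻¹)

/-- The constant `Γ`. -/
noncomputable def Gam (N : ℕ) : ℝ :=
  ∫ s in (1/4 : ℝ)..(3/4), (∫ τ in (1/4 : ℝ)..s, (N:ℝ) * τ ^ (N - 1)) ^ ((N:ℝ)⁻¹)

/-!
For `c, γ ≥ 0` and `v ≥ 0` on `[0,1]` both integrands in `MAopc N c γ v` are nonnegative, so
`MAopc N c γ v t` dominates the integral of the outer integrand over any subinterval of `[t,1]`.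
If moreover `v ≥ m` on `[1/4,3/4]`, the inner integral up to `s ≥ b ∈ [1/4,3/4]` is at least
`c m^γ (b^N - 4^{-N})`. Integrating over `[1/4,3/4]` gives `MAopc N c γ v (1/4) ≥ c^{1/N} m^{γ/N} Γ`;
integrating over `[3/4,1]` and using `Γ ≤ ((3/4)^N - 4^{-N})^{1/N} / 2` gives
`MAopc N c γ v ≥ c^{1/N} m^{γ/N} Γ/4` on all of `[1/4,3/4]`.

For the fixed point `v`, the second bound with `m = ‖v‖/4` controls `T̃₂ v` from below on `[1/4,3/4]`,
and the first bound for `T̃₁` then gives `‖v‖ ≥ v(1/4) ≥ λ^{1/N} μ^{α/N²} (Γ/4)^{1+α/N} ‖v‖`: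
the power of `‖v‖` is `(β/N)(α/N) = 1`.
-/

open MeasureTheory intervalIntegral Real

lemma abs_le_supNorm {v : ℝ → ℝ} (hv : ContinuousOn v (Icc 0 1)) {t : ℝ} (ht : t ∈ Icc (0:ℝ) 1) :
    |v t| ≤ supNorm v :=
  le_csSup (isCompact_Icc.image_of_continuousOn hv.abs).bddAbove ⟨t, ht, rfl⟩

lemma integral_natCast_mul_pow_sub_one (N : ℕ) (a b : ℝ) :
    ∫ τ in a..b, (N:ℝ) * τ ^ (N - 1) = b ^ N - a ^ N :=
  integral_eq_sub_of_hasDerivAt (fun x _ => hasDerivAt_pow N x)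
    ((continuous_const.mul (continuous_pow _)).intervalIntegrable _ _)

lemma Gam_eq (N : ℕ) :
    Gam N = ∫ s in (1/4:ℝ)..(3/4), (s ^ N - (1/4:ℝ) ^ N) ^ (N:ℝ)⁻¹ := by
  simp only [Gam, integral_natCast_mul_pow_sub_one]

lemma continuous_rpow_pow_sub (N : ℕ) (a : ℝ) :
    Continuous fun s : ℝ => (s ^ N - a) ^ (N:ℝ)⁻¹ :=
  (continuous_pow N |>.sub continuous_const).rpow_const fun _ => Or.inr (by positivity)

lemma pow_sub_quarter_pow_nonneg (N : ℕ) {b : ℝ} (hb : 1/4 ≤ b) : 0 ≤ b ^ N - (1/4) ^ N :=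
  sub_nonneg.2 (pow_le_pow_left₀ (by norm_num) hb N)

lemma Gam_nonneg (N : ℕ) : 0 ≤ Gam N := by
  rw [Gam_eq]
  refine integral_nonneg (by norm_num) fun s hs => rpow_nonneg ?_ _
  exact pow_sub_quarter_pow_nonneg N hs.1

lemma Gam_le_rpow_div_two (N : ℕ) : Gam N ≤ ((3/4:ℝ) ^ N - (1/4) ^ N) ^ (N:ℝ)⁻¹ / 2 := by
  calc Gam N ≤ ∫ _ in (1/4:ℝ)..(3/4), ((3/4:ℝ) ^ N - (1/4) ^ N) ^ (N:ℝ)⁻¹ := by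
        rw [Gam_eq]
        refine integral_mono_on (by norm_num) ((continuous_rpow_pow_sub N _).intervalIntegrable _ _)
          intervalIntegrable_const fun s hs => ?_
        have hs0 : 0 ≤ s := by linarith [hs.1]
        gcongr
        · exact pow_sub_quarter_pow_nonneg N hs.1
        · exact hs.2
    _ = _ := by simp only [intervalIntegral.integral_const, smul_eq_mul]; ring

noncomputable def MAdensity (N : ℕ) (c γ : ℝ) (v : ℝ → ℝ) (τ : ℝ) : ℝ :=
  (N:ℝ) * τ ^ (N - 1) * (c * v τ ^ γ)

noncomputable def MAintegrand (N : ℕ) (c γ : ℝ) (v : ℝ → ℝ) (s : ℝ) : ℝ :=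
  (∫ τ in (0:ℝ)..s, MAdensity N c γ v τ) ^ (N:ℝ)⁻¹

section

variable {N : ℕ} {c γ m : ℝ} {v : ℝ → ℝ}

lemma MAdensity_nonneg (hc : 0 ≤ c) (hv : ∀ t ∈ Icc (0:ℝ) 1, 0 ≤ v t) {τ : ℝ}
    (hτ : τ ∈ Icc (0:ℝ) 1) : 0 ≤ MAdensity N c γ v τ := by
  have := hτ.1
  have := hv τ hτ
  unfold MAdensity
  positivity

lemma continuousOn_MAdensity (hv : ContinuousOn v (Icc 0 1)) (hγ : 0 ≤ γ) :
    ContinuousOn (MAdensity N c γ v) (Icc 0 1) :=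
  (continuous_const.mul (continuous_pow _)).continuousOn.mul
    (continuousOn_const.mul (hv.rpow_const fun _ _ => Or.inr hγ))

lemma intervalIntegrable_MAdensity (hv : ContinuousOn v (Icc 0 1)) (hγ : 0 ≤ γ) {x y : ℝ}
    (hx : x ∈ Icc (0:ℝ) 1) (hy : y ∈ Icc (0:ℝ) 1) :
    IntervalIntegrable (MAdensity N c γ v) volume x y :=
  ((continuousOn_MAdensity hv hγ).mono (uIcc_subset_Icc hx hy)).intervalIntegrable

lemma MAintegrand_nonneg (hc : 0 ≤ c) (hv : ∀ t ∈ Icc (0:ℝ) 1, 0 ≤ v t) {s : ℝ}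
    (hs : s ∈ Icc (0:ℝ) 1) : 0 ≤ MAintegrand N c γ v s :=
  rpow_nonneg (integral_nonneg hs.1 fun _ hτ =>
    MAdensity_nonneg hc hv ⟨hτ.1, hτ.2.trans hs.2⟩) _

lemma continuousOn_MAintegrand (hv : ContinuousOn v (Icc 0 1)) (hγ : 0 ≤ γ) :
    ContinuousOn (MAintegrand N c γ v) (Icc 0 1) := by
  have h := continuousOn_primitive_interval (a := 0) (b := 1) (μ := volume)
    (f := MAdensity N c γ v) (by
      rw [uIcc_of_le zero_le_one]; exact (continuousOn_MAdensity hv hγ).integrableOn_Icc)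
  rw [uIcc_of_le zero_le_one] at h
  exact h.rpow_const fun _ _ => Or.inr (by positivity)

lemma intervalIntegrable_MAintegrand (hv : ContinuousOn v (Icc 0 1)) (hγ : 0 ≤ γ) {x y : ℝ}
    (hx : x ∈ Icc (0:ℝ) 1) (hy : y ∈ Icc (0:ℝ) 1) :
    IntervalIntegrable (MAintegrand N c γ v) volume x y :=
  ((continuousOn_MAintegrand hv hγ).mono (uIcc_subset_Icc hx hy)).intervalIntegrable

lemma MAopc_nonneg (hc : 0 ≤ c) (hv : ∀ t ∈ Icc (0:ℝ) 1, 0 ≤ v t) {t : ℝ}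
    (ht : t ∈ Icc (0:ℝ) 1) : 0 ≤ MAopc N c γ v t :=
  integral_nonneg ht.2 fun _ hs => MAintegrand_nonneg hc hv ⟨ht.1.trans hs.1, hs.2⟩

lemma continuousOn_MAopc (hv : ContinuousOn v (Icc 0 1)) (hγ : 0 ≤ γ) :
    ContinuousOn (MAopc N c γ v) (Icc 0 1) := by
  have h := continuousOn_primitive_interval_left (a := 0) (b := 1) (μ := volume)
    (f := MAintegrand N c γ v) (by
      rw [uIcc_of_le zero_le_one]; exact (continuousOn_MAintegrand hv hγ).integrableOn_Icc)
  rwa [uIcc_of_le zero_le_one] at h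

lemma le_integral_MAdensity (hc : 0 ≤ c) (hγ : 0 ≤ γ) (hm : 0 ≤ m)
    (hvc : ContinuousOn v (Icc 0 1)) (hv : ∀ t ∈ Icc (0:ℝ) 1, 0 ≤ v t)
    (hvm : ∀ t ∈ Icc (1/4:ℝ) (3/4), m ≤ v t) {b s : ℝ} (hb : b ∈ Icc (1/4:ℝ) (3/4))
    (hbs : b ≤ s) (hs : s ≤ 1) :
    c * m ^ γ * (b ^ N - (1/4) ^ N) ≤ ∫ τ in (0:ℝ)..s, MAdensity N c γ v τ := by
  calc c * m ^ γ * (b ^ N - (1/4) ^ N)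
      = ∫ τ in (1/4:ℝ)..b, c * m ^ γ * ((N:ℝ) * τ ^ (N - 1)) := by
        rw [intervalIntegral.integral_const_mul, integral_natCast_mul_pow_sub_one]
    _ ≤ ∫ τ in (1/4:ℝ)..b, MAdensity N c γ v τ := by
        refine integral_mono_on hb.1 (Continuous.intervalIntegrable (by fun_prop) _ _)
          (intervalIntegrable_MAdensity hvc hγ (by norm_num) ⟨by linarith [hb.1], by linarith [hb.2]⟩)
          fun τ hτ => ?_
        have hτ0 : 0 ≤ τ := by linarith [hτ.1]
        rw [MAdensity, mul_comm]
        gcongr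
        exact hvm τ ⟨hτ.1, hτ.2.trans hb.2⟩
    _ ≤ ∫ τ in (0:ℝ)..s, MAdensity N c γ v τ :=
        integral_mono_interval (by norm_num) hb.1 hbs
          (ae_restrict_of_forall_mem measurableSet_Ioc fun τ hτ =>
            MAdensity_nonneg hc hv ⟨hτ.1.le, hτ.2.trans hs⟩)
          (intervalIntegrable_MAdensity hvc hγ (by norm_num) ⟨by linarith [hb.1], hs⟩)

lemma le_MAintegrand (hc : 0 ≤ c) (hγ : 0 ≤ γ) (hm : 0 ≤ m)
    (hvc : ContinuousOn v (Icc 0 1)) (hv : ∀ t ∈ Icc (0:ℝ) 1, 0 ≤ v t)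
    (hvm : ∀ t ∈ Icc (1/4:ℝ) (3/4), m ≤ v t) {b s : ℝ} (hb : b ∈ Icc (1/4:ℝ) (3/4))
    (hbs : b ≤ s) (hs : s ≤ 1) :
    c ^ (N:ℝ)⁻¹ * m ^ (γ / N) * (b ^ N - (1/4) ^ N) ^ (N:ℝ)⁻¹ ≤ MAintegrand N c γ v s := by
  have hb' : 0 ≤ b ^ N - (1/4) ^ N := pow_sub_quarter_pow_nonneg N hb.1
  calc c ^ (N:ℝ)⁻¹ * m ^ (γ / N) * (b ^ N - (1/4) ^ N) ^ (N:ℝ)⁻¹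
      = (c * m ^ γ * (b ^ N - (1/4) ^ N)) ^ (N:ℝ)⁻¹ := by
        rw [mul_rpow (by positivity) hb', mul_rpow hc (by positivity), ← rpow_mul hm,
          div_eq_mul_inv]
    _ ≤ MAintegrand N c γ v s :=
        rpow_le_rpow (by positivity) (le_integral_MAdensity hc hγ hm hvc hv hvm hb hbs hs)
          (by positivity)

lemma mul_Gam_le_MAopc_quarter (hc : 0 ≤ c) (hγ : 0 ≤ γ) (hm : 0 ≤ m)
    (hvc : ContinuousOn v (Icc 0 1)) (hv : ∀ t ∈ Icc (0:ℝ) 1, 0 ≤ v t)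
    (hvm : ∀ t ∈ Icc (1/4:ℝ) (3/4), m ≤ v t) :
    c ^ (N:ℝ)⁻¹ * m ^ (γ / N) * Gam N ≤ MAopc N c γ v (1/4) := by
  calc c ^ (N:ℝ)⁻¹ * m ^ (γ / N) * Gam N
      = ∫ s in (1/4:ℝ)..(3/4), c ^ (N:ℝ)⁻¹ * m ^ (γ / N) * (s ^ N - (1/4) ^ N) ^ (N:ℝ)⁻¹ := by
        rw [intervalIntegral.integral_const_mul, Gam_eq]
    _ ≤ ∫ s in (1/4:ℝ)..(3/4), MAintegrand N c γ v s :=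
        integral_mono_on (by norm_num)
          ((continuous_const.mul (continuous_rpow_pow_sub N _)).intervalIntegrable _ _)
          (intervalIntegrable_MAintegrand hvc hγ (by norm_num) (by norm_num))
          fun s hs => le_MAintegrand hc hγ hm hvc hv hvm hs le_rfl (by linarith [hs.2])
    _ ≤ MAopc N c γ v (1/4) :=
        integral_mono_interval le_rfl (by norm_num) (by norm_num)
          (ae_restrict_of_forall_mem measurableSet_Ioc fun s hs =>
            MAintegrand_nonneg hc hv ⟨by linarith [hs.1], hs.2⟩)
          (intervalIntegrable_MAintegrand hvc hγ (by norm_num) (by norm_num))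

lemma mul_Gam_div_four_le_MAopc (hc : 0 ≤ c) (hγ : 0 ≤ γ) (hm : 0 ≤ m)
    (hvc : ContinuousOn v (Icc 0 1)) (hv : ∀ t ∈ Icc (0:ℝ) 1, 0 ≤ v t)
    (hvm : ∀ t ∈ Icc (1/4:ℝ) (3/4), m ≤ v t) {t : ℝ} (ht : t ∈ Icc (1/4:ℝ) (3/4)) :
    c ^ (N:ℝ)⁻¹ * m ^ (γ / N) * (Gam N / 4) ≤ MAopc N c γ v t := by
  set C := c ^ (N:ℝ)⁻¹ * m ^ (γ / N)
  set K := ((3/4:ℝ) ^ N - (1/4) ^ N) ^ (N:ℝ)⁻¹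
  have hC : 0 ≤ C := by positivity
  have hK : 0 ≤ K := rpow_nonneg (pow_sub_quarter_pow_nonneg N (by norm_num)) _
  calc C * (Gam N / 4) ≤ ∫ _ in (3/4:ℝ)..1, C * K := by
        rw [intervalIntegral.integral_const, smul_eq_mul]
        nlinarith [Gam_le_rpow_div_two N]
    _ ≤ ∫ s in (3/4:ℝ)..1, MAintegrand N c γ v s :=
        integral_mono_on (by norm_num) intervalIntegrable_const
          (intervalIntegrable_MAintegrand hvc hγ (by norm_num) (by norm_num))
          fun s hs => le_MAintegrand hc hγ hm hvc hv hvm ⟨by norm_num, le_rfl⟩ hs.1 hs.2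
    _ ≤ MAopc N c γ v t :=
        integral_mono_interval ht.2 (by norm_num) le_rfl
          (ae_restrict_of_forall_mem measurableSet_Ioc fun s hs =>
            MAintegrand_nonneg hc hv ⟨by linarith [hs.1, ht.1], hs.2⟩)
          (intervalIntegrable_MAintegrand hvc hγ ⟨by linarith [ht.1], by linarith [ht.2]⟩
            (by norm_num))

end

lemma rpow_inv_mul_rpow_div_mul_rpow {x y z p α β : ℝ} (hx : 0 ≤ x) (hy : 0 ≤ y) (hz : 0 ≤ z)
    (hp : p ≠ 0) (hαβ : α * β = p ^ 2) :
    (x ^ p⁻¹ * y ^ (β / p) * z) ^ (α / p) = x ^ (α / p ^ 2) * y * z ^ (α / p) := by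
  rw [mul_rpow (by positivity) hz, mul_rpow (by positivity) (by positivity), ← rpow_mul hx,
    ← rpow_mul hy, show β / p * (α / p) = 1 by field_simp; linarith, rpow_one]
  congr 3
  field_simp

theorem stmt13_general (N : ℕ) (α β lam mu : ℝ)
    (hα : 0 < α) (hβ : 0 < β) (hlam : 0 < lam) (hmu : 0 < mu)
    (hαβ : α * β = (N:ℝ) ^ 2)
    (v : ℝ → ℝ) (hv : memK v) (hne : ∃ t ∈ Icc (0:ℝ) 1, v t ≠ 0)
    (hfix : ∀ t ∈ Icc (0:ℝ) 1, MAopc N lam α (MAopc N mu β v) t = v t) :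
    lam ^ ((N:ℝ)⁻¹) * mu ^ (α / (N:ℝ) ^ 2) * (Gam N / 4) ^ (1 + α / N) ≤ 1 := by
  obtain ⟨hvc, hv0, hvK⟩ := hv
  have hvM : ∀ t ∈ Icc (0:ℝ) 1, v t ≤ supNorm v := fun t ht =>
    (le_abs_self _).trans (abs_le_supNorm hvc ht)
  set M := supNorm v
  obtain ⟨t₀, ht₀, hvt₀⟩ := hne
  have hM : 0 < M := ((hv0 t₀ ht₀).lt_of_ne' hvt₀).trans_le (hvM t₀ ht₀)
  have hΓ := Gam_nonneg N
  set m := mu ^ (N:ℝ)⁻¹ * (M / 4) ^ (β / N) * (Gam N / 4)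
  have hw : ∀ t ∈ Icc (1/4:ℝ) (3/4), m ≤ MAopc N mu β v t := fun t ht =>
    mul_Gam_div_four_le_MAopc hmu.le hβ.le (by positivity) hvc hv0
      (fun s hs => by linarith [hvK s hs]) ht
  have hv₁ : lam ^ (N:ℝ)⁻¹ * m ^ (α / N) * Gam N ≤ M :=
    calc _ ≤ MAopc N lam α (MAopc N mu β v) (1/4) :=
          mul_Gam_le_MAopc_quarter hlam.le hα.le (by positivity) (continuousOn_MAopc hvc hβ.le)
            (fun t ht => MAopc_nonneg hmu.le hv0 ht) hw
      _ = v (1/4) := hfix _ (by norm_num)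
      _ ≤ M := hvM _ (by norm_num)
  have hN : (N:ℝ) ≠ 0 := by
    rintro hN
    have := mul_pos hα hβ
    rw [hαβ, hN] at this
    norm_num at this
  have key : lam ^ (N:ℝ)⁻¹ * mu ^ (α / N ^ 2) * (Gam N / 4) ^ (1 + α / N) * M ≤ 1 * M := by
    rw [rpow_one_add' (by positivity) (by positivity), one_mul]
    calc _ = lam ^ (N:ℝ)⁻¹ * m ^ (α / N) * Gam N := by
          rw [rpow_inv_mul_rpow_div_mul_rpow hmu.le (by positivity) (by positivity) hN hαβ]; ring
      _ ≤ M := hv₁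
  exact le_of_mul_le_mul_right key hM

theorem stmt13 (N : ℕ) (hN : 2 ≤ N) (α β lam mu : ℝ)
    (hα : 0 < α) (hβ : 0 < β) (hlam : 0 < lam) (hmu : 0 < mu)
    (hαβ : α * β = (N:ℝ) ^ 2)
    (v : ℝ → ℝ) (hv : memK v) (hne : ∃ t ∈ Icc (0:ℝ) 1, v t ≠ 0)
    (hfix : ∀ t ∈ Icc (0:ℝ) 1, MAopc N lam α (MAopc N mu β v) t = v t) :
    lam ^ ((N:ℝ)⁻¹) * mu ^ (α / (N:ℝ) ^ 2) * (Gam N / 4) ^ (1 + α / N) ≤ 1 :=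
  stmt13_general N α β lam mu hα hβ hlam hmu hαβ v hv hne hfix
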